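/- The lattice N(E_6^4) — the lattice in ℝ²⁴ (with Gram matrix the block diagonal G(E_6)⁴) generated by ℤ²⁴ together with the vectors (v,0,v,2v)ᵀ and (v,2v,0,v)ᵀ where v = (1/3)(1,−1,0,1,−1,0)ᵀ — is an even unimodular lattice of rank 24. -/

import Mathlib

/-- The Gram matrix `G(E₆)`. -/
def GE6 : Matrix (Fin 6) (Fin 6) ℝ :=
  !![ 2, -1,  0,  0,  0,  0;
     -1,  2, -1,  0,  0,  0;
      0, -1,  2, -1,  0, -1;
      0,  0, -1,  2, -1,  0;
      0,  0,  0, -1,  2,  0;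
      0,  0, -1,  0,  0,  2]

/-- The glue vector `v = (1/3)(1,−1,0,1,−1,0)`. -/
noncomputable def vE6 : Fin 6 → ℝ := fun i => (1 / 3) * ![1, -1, 0, 1, -1, 0] i

/-- The bilinear form on `ℝ²⁴ = (ℝ⁶)⁴` given by the block diagonal Gram matrix
`G(E₆)⁴`. -/
noncomputable def BE6 (x y : Fin 4 × Fin 6 → ℝ) : ℝ :=
  ∑ p : Fin 4 × Fin 6, ∑ j : Fin 6, x p * GE6 p.2 j * y (p.1, j)

/-- The Niemeier lattice `N(E₆⁴)`: the ℤ-span of `ℤ²⁴` together with the glue vectors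
`(v,0,v,2v)` and `(v,2v,0,v)`. -/
noncomputable def NE6 : Submodule ℤ (Fin 4 × Fin 6 → ℝ) :=
  Submodule.span ℤ
    ({x : Fin 4 × Fin 6 → ℝ | ∀ p, ∃ m : ℤ, x p = (m : ℝ)} ∪
      {fun p => ![vE6, 0, vE6, 2 • vE6] p.1 p.2,
       fun p => ![vE6, 2 • vE6, 0, vE6] p.1 p.2})

/-!
Every `x ∈ N(E₆⁴)` is `z + glue c` with `z ∈ ℤ²⁴` and `c` in the glue code spanned by
`(1,0,1,2)` and `(1,2,0,1)`, where `glue c` has blocks `c k • v`. Since `G v = 3 v` and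
`v ⬝ v = 4/9`, `z` pairs integrally with `glue c` and `glue c` has norm `(4/3) c ⬝ c ∈ 8ℤ`,
while `ℤ²⁴` is even because `G = U + Uᵀ` with `U` integral. Integrality follows from evenness
by polarization.

Conversely, if `y` pairs integrally with `ℤ²⁴`, then `G` maps each block of `y` into `ℤ⁶`, and
`G⁻¹ = M + v fᵀ` with `M`, `f` integral gives `y = z + glue c` with `c ∈ ℤ⁴`. Pairing with the two
glue generators makes `c` orthogonal mod 3 to the glue code, which is self-dual mod 3 (it is the
tetracode), so `y ∈ N(E₆⁴)`. The rank is 24 because `ℤ²⁴ ≤ N(E₆⁴) ≤ ⅓ ℤ²⁴`.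
-/

open Matrix
open scoped Kronecker

section IntVec

variable {ι κ : Type*}

def intVec (ι : Type*) : Submodule ℤ (ι → ℝ) :=
  LinearMap.range ((Int.castAddHom ℝ).toIntLinearMap.compLeft ι)

lemma mem_intVec {x : ι → ℝ} : x ∈ intVec ι ↔ ∀ i, ∃ m : ℤ, x i = m := by
  refine ⟨?_, fun h => ?_⟩
  · rintro ⟨n, rfl⟩ i
    exact ⟨n i, rfl⟩
  · choose n hn using h
    exact ⟨n, funext fun i => (hn i).symm⟩

lemma mem_intVec_iff_exists {x : ι → ℝ} : x ∈ intVec ι ↔ ∃ n : ι → ℤ, (↑) ∘ n = x := Iff.rfl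

lemma intCast_comp_mem_intVec (n : ι → ℤ) : ((↑) ∘ n : ι → ℝ) ∈ intVec ι := ⟨n, rfl⟩

lemma single_one_mem_intVec [DecidableEq ι] (i : ι) : Pi.single i (1 : ℝ) ∈ intVec ι := by
  refine ⟨Pi.single i 1, funext fun j => ?_⟩
  by_cases h : j = i <;> simp [h]

lemma rank_intVec [Fintype ι] : Module.rank ℤ (intVec ι) = Fintype.card ι := by
  rw [intVec, rank_range_of_injective, rank_fun']
  exact fun n n' h => funext fun i => Int.cast_injective (congrFun h i)

lemma rank_eq_card_of_intVec_le [Fintype ι] {L : Submodule ℤ (ι → ℝ)} {n : ℤ} (hn : n ≠ 0)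
    (hle : intVec ι ≤ L) (hsmul : ∀ x ∈ L, n • x ∈ intVec ι) :
    Module.rank ℤ L = Fintype.card ι := by
  have hinj : Function.Injective (n • LinearMap.id : (ι → ℝ) →ₗ[ℤ] (ι → ℝ)) :=
    smul_right_injective _ hn
  refine le_antisymm ?_ (rank_intVec (ι := ι) ▸ Submodule.rank_mono hle)
  rw [← rank_map_eq hinj, ← rank_intVec]
  exact Submodule.rank_mono (Submodule.map_le_iff_le_comap.mpr hsmul)

variable [Fintype ι]

lemma exists_int_dotProduct {x y : ι → ℝ} (hx : x ∈ intVec ι) (hy : y ∈ intVec ι) :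
    ∃ m : ℤ, x ⬝ᵥ y = m := by
  obtain ⟨n, rfl⟩ := mem_intVec_iff_exists.mp hx
  obtain ⟨n', rfl⟩ := mem_intVec_iff_exists.mp hy
  exact ⟨n ⬝ᵥ n', (RingHom.map_dotProduct (Int.castRingHom ℝ) n n').symm⟩

lemma intCast_comp_mulVec (M : Matrix κ ι ℤ) (n : ι → ℤ) :
    ((↑) ∘ (M *ᵥ n) : κ → ℝ) = M.map (↑) *ᵥ ((↑) ∘ n) :=
  funext (RingHom.map_mulVec (Int.castRingHom ℝ) M n)

lemma intCast_mulVec_mem_intVec (M : Matrix κ ι ℤ) {x : ι → ℝ} (hx : x ∈ intVec ι) :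
    M.map (↑) *ᵥ x ∈ intVec κ := by
  obtain ⟨n, rfl⟩ := mem_intVec_iff_exists.mp hx
  exact ⟨M *ᵥ n, intCast_comp_mulVec M n⟩

lemma dotProduct_add_transpose_mulVec {R : Type*} [CommRing R] (U : Matrix ι ι R) (x : ι → R) :
    x ⬝ᵥ (U + Uᵀ) *ᵥ x = 2 * (x ⬝ᵥ U *ᵥ x) := by
  rw [add_mulVec, dotProduct_add, mulVec_transpose, dotProduct_mulVec, dotProduct_comm (x ᵥ* U)]
  ring

lemma exists_even_dotProduct_add_transpose (U : Matrix ι ι ℤ) {x : ι → ℝ} (hx : x ∈ intVec ι) :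
    ∃ m : ℤ, x ⬝ᵥ (U + Uᵀ).map (↑) *ᵥ x = 2 * m := by
  obtain ⟨n, rfl⟩ := mem_intVec_iff_exists.mp hx
  refine ⟨n ⬝ᵥ U *ᵥ n, ?_⟩
  have h := RingHom.map_dotProduct (Int.castRingHom ℝ) n ((U + Uᵀ) *ᵥ n)
  rw [dotProduct_add_transpose_mulVec] at h
  simpa [intCast_comp_mulVec] using h.symm

end IntVec

lemma LinearMap.BilinForm.IsSymm.exists_int_of_even {V : Type*} [AddCommGroup V] [Module ℝ V]
    {B : LinearMap.BilinForm ℝ V} (hB : B.IsSymm) {L : Submodule ℤ V}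
    (heven : ∀ x ∈ L, ∃ m : ℤ, B x x = 2 * m) {x y : V} (hx : x ∈ L) (hy : y ∈ L) :
    ∃ m : ℤ, B x y = m := by
  obtain ⟨a, ha⟩ := heven _ (L.add_mem hx hy)
  obtain ⟨b, hb⟩ := heven x hx
  obtain ⟨c, hc⟩ := heven y hy
  refine ⟨a - b - c, ?_⟩
  simp only [map_add, LinearMap.add_apply, hB.eq y x] at ha
  push_cast
  linarith

lemma GE6_transpose : GE6ᵀ = GE6 := by
  ext i j; fin_cases i <;> fin_cases j <;> rfl

lemma GE6_mulVec_vE6 : GE6 *ᵥ vE6 = (3 : ℝ) • vE6 := by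
  ext i; fin_cases i <;> simp [GE6, vE6, mulVec, dotProduct, Fin.sum_univ_succ] <;> norm_num

lemma vE6_dotProduct_vE6 : vE6 ⬝ᵥ vE6 = 4 / 9 := by
  simp [vE6, dotProduct, Fin.sum_univ_succ]; norm_num

lemma three_smul_vE6_mem : (3 : ℝ) • vE6 ∈ intVec (Fin 6) := by
  refine ⟨![1, -1, 0, 1, -1, 0], ?_⟩
  ext i; fin_cases i <;> simp [vE6]

def e6UpperTriangular : Matrix (Fin 6) (Fin 6) ℤ :=
  !![1, -1, 0, 0, 0, 0; 0, 1, -1, 0, 0, 0; 0, 0, 1, -1, 0, -1;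
     0, 0, 0, 1, -1, 0; 0, 0, 0, 0, 1, 0; 0, 0, 0, 0, 0, 1]

lemma GE6_eq_add_transpose : GE6 = (e6UpperTriangular + e6UpperTriangularᵀ).map (↑) := by
  ext i j; fin_cases i <;> fin_cases j <;> simp [GE6, e6UpperTriangular]

def e6InvIntPart : Matrix (Fin 6) (Fin 6) ℤ :=
  !![1, 1, 2, 1, 0, 1; 2, 4, 4, 3, 2, 2; 2, 4, 6, 4, 2, 3;
     1, 2, 4, 3, 1, 2; 1, 2, 2, 2, 2, 1; 1, 2, 3, 2, 1, 2]

def e6InvCoeff : Fin 6 → ℤ := ![1, 2, 0, 1, 2, 0]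

lemma GE6_inv_mul : (e6InvIntPart.map (↑) + vecMulVec vE6 ((↑) ∘ e6InvCoeff)) * GE6 = 1 := by
  ext i j; fin_cases i <;> fin_cases j <;>
    simp [GE6, vE6, e6InvIntPart, e6InvCoeff, mul_apply, vecMulVec, Fin.sum_univ_succ] <;> norm_num

lemma exists_eq_add_smul_vE6_of_mulVec_mem {y : Fin 6 → ℝ} (hy : GE6 *ᵥ y ∈ intVec (Fin 6)) :
    ∃ z ∈ intVec (Fin 6), ∃ c : ℤ, y = z + (c : ℝ) • vE6 := by
  obtain ⟨c, hc⟩ := exists_int_dotProduct (intCast_comp_mem_intVec e6InvCoeff) hy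
  refine ⟨_, intCast_mulVec_mem_intVec e6InvIntPart hy, c, ?_⟩
  conv_lhs => rw [← one_mulVec y, ← GE6_inv_mul, ← mulVec_mulVec, add_mulVec, vecMulVec_mulVec]
  rw [hc, op_smul_eq_smul]

lemma one_kronecker_mulVec_apply {κ m n R : Type*} [Fintype κ] [DecidableEq κ] [Fintype n]
    [NonAssocSemiring R] (A : Matrix m n R) (y : κ × n → R) (k : κ) (i : m) :
    ((1 : Matrix κ κ R) ⊗ₖ A *ᵥ y) (k, i) = (A *ᵥ Function.curry y k) i := by
  simp [mulVec, dotProduct, Fintype.sum_prod_type, one_apply, ite_mul, kroneckerMap_apply]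

def blockGE6 : Matrix (Fin 4 × Fin 6) (Fin 4 × Fin 6) ℝ := 1 ⊗ₖ GE6

lemma BE6_eq_dotProduct (x y : Fin 4 × Fin 6 → ℝ) : BE6 x y = x ⬝ᵥ blockGE6 *ᵥ y := by
  simp only [dotProduct, Fintype.sum_prod_type, blockGE6, one_kronecker_mulVec_apply]
  simp only [BE6, Fintype.sum_prod_type, mulVec, dotProduct, Function.curry_apply, Finset.mul_sum,
    mul_assoc]

noncomputable def bilinBE6 : LinearMap.BilinForm ℝ (Fin 4 × Fin 6 → ℝ) := toBilin' blockGE6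

lemma bilinBE6_apply (x y : Fin 4 × Fin 6 → ℝ) : bilinBE6 x y = BE6 x y := by
  rw [bilinBE6, toBilin'_apply', BE6_eq_dotProduct]

lemma bilinBE6_isSymm : bilinBE6.IsSymm := by
  refine isSymm_toBilin'_iff_isSymm.mpr ?_
  rw [IsSymm, blockGE6, ← kroneckerMap_transpose, transpose_one, GE6_transpose]

lemma BE6_comm (x y : Fin 4 × Fin 6 → ℝ) : BE6 x y = BE6 y x := by
  rw [← bilinBE6_apply, bilinBE6_isSymm.eq, bilinBE6_apply]

noncomputable def glue : (Fin 4 → ℤ) →ₗ[ℤ] (Fin 4 × Fin 6 → ℝ) where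
  toFun c p := c p.1 * vE6 p.2
  map_add' _ _ := by ext; simp [add_mul]
  map_smul' _ _ := by ext; simp [mul_assoc]

lemma glue_apply (c : Fin 4 → ℤ) (p : Fin 4 × Fin 6) : glue c p = c p.1 * vE6 p.2 := rfl

lemma blockGE6_mulVec_glue (c : Fin 4 → ℤ) : blockGE6 *ᵥ glue c = glue ((3 : ℤ) • c) := by
  ext ⟨k, i⟩
  have hcurry : Function.curry (glue c) k = (c k : ℝ) • vE6 := rfl
  rw [blockGE6, one_kronecker_mulVec_apply, hcurry, mulVec_smul, GE6_mulVec_vE6]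
  simp only [Pi.smul_apply, smul_eq_mul, glue_apply, Int.cast_mul, Int.cast_ofNat]
  ring

lemma glue_three_smul_mem (c : Fin 4 → ℤ) : glue ((3 : ℤ) • c) ∈ intVec _ := by
  refine mem_intVec.mpr fun p => ?_
  obtain ⟨m, hm⟩ := mem_intVec.mp three_smul_vE6_mem p.2
  refine ⟨c p.1 * m, ?_⟩
  rw [Pi.smul_apply, smul_eq_mul] at hm
  rw [glue_apply, Pi.smul_apply, smul_eq_mul, Int.cast_mul, Int.cast_mul, ← hm]
  push_cast
  ring

lemma glue_dotProduct_glue (c c' : Fin 4 → ℤ) :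
    glue c ⬝ᵥ glue c' = ((c ⬝ᵥ c' : ℤ) : ℝ) * (vE6 ⬝ᵥ vE6) := by
  simp only [dotProduct, Fintype.sum_prod_type, glue_apply, Int.cast_sum, Int.cast_mul,
    Finset.sum_mul_sum]
  exact Finset.sum_congr rfl fun k _ => Finset.sum_congr rfl fun i _ => by ring

lemma BE6_glue_glue (c c' : Fin 4 → ℤ) : BE6 (glue c) (glue c') = 4 / 3 * ((c ⬝ᵥ c' : ℤ) : ℝ) := by
  rw [BE6_eq_dotProduct, blockGE6_mulVec_glue, glue_dotProduct_glue, vE6_dotProduct_vE6,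
    dotProduct_smul, smul_eq_mul]
  push_cast
  ring

lemma exists_int_BE6_glue {z : Fin 4 × Fin 6 → ℝ} (hz : z ∈ intVec _) (c : Fin 4 → ℤ) :
    ∃ m : ℤ, BE6 z (glue c) = m := by
  rw [BE6_eq_dotProduct, blockGE6_mulVec_glue]
  exact exists_int_dotProduct hz (glue_three_smul_mem c)

lemma BE6_eq_sum_curry (x y : Fin 4 × Fin 6 → ℝ) :
    BE6 x y = ∑ k, Function.curry x k ⬝ᵥ GE6 *ᵥ Function.curry y k := by
  simp only [BE6_eq_dotProduct, blockGE6, dotProduct, Fintype.sum_prod_type,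
    one_kronecker_mulVec_apply]
  rfl

lemma exists_even_BE6_self {z : Fin 4 × Fin 6 → ℝ} (hz : z ∈ intVec _) :
    ∃ m : ℤ, BE6 z z = 2 * m := by
  have hblock : ∀ k, ∃ m : ℤ, Function.curry z k ⬝ᵥ GE6 *ᵥ Function.curry z k = 2 * m := by
    intro k
    rw [GE6_eq_add_transpose]
    exact exists_even_dotProduct_add_transpose _ (mem_intVec.mpr fun i => mem_intVec.mp hz (k, i))
  choose m hm using hblock
  exact ⟨∑ k, m k, by simp [BE6_eq_sum_curry, hm, Finset.mul_sum]⟩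

lemma blockGE6_mulVec_mem_of_dual {y : Fin 4 × Fin 6 → ℝ}
    (hy : ∀ x ∈ intVec _, ∃ m : ℤ, BE6 y x = m) : blockGE6 *ᵥ y ∈ intVec _ := by
  refine mem_intVec.mpr fun p => ?_
  obtain ⟨m, hm⟩ := hy (Pi.single p 1) (single_one_mem_intVec p)
  rw [BE6_comm, BE6_eq_dotProduct, single_one_dotProduct] at hm
  exact ⟨m, hm⟩

lemma exists_eq_add_glue_of_mulVec_mem {y : Fin 4 × Fin 6 → ℝ} (hy : blockGE6 *ᵥ y ∈ intVec _) :
    ∃ z ∈ intVec _, ∃ c : Fin 4 → ℤ, y = z + glue c := by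
  have hblock : ∀ k, ∃ z ∈ intVec (Fin 6), ∃ c : ℤ, Function.curry y k = z + (c : ℝ) • vE6 := by
    intro k
    refine exists_eq_add_smul_vE6_of_mulVec_mem (mem_intVec.mpr fun i => ?_)
    rw [← one_kronecker_mulVec_apply]
    exact mem_intVec.mp hy (k, i)
  choose z hz c hc using hblock
  refine ⟨fun p => z p.1 p.2, mem_intVec.mpr fun p => mem_intVec.mp (hz p.1) p.2, c,
    funext fun p => ?_⟩
  simpa [glue_apply] using congrFun (hc p.1) p.2

def glueCode : Submodule ℤ (Fin 4 → ℤ) := Submodule.span ℤ {![1, 0, 1, 2], ![1, 2, 0, 1]}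

lemma exists_dotProduct_self_eq_six_mul {c : Fin 4 → ℤ} (hc : c ∈ glueCode) :
    ∃ m : ℤ, c ⬝ᵥ c = 6 * m := by
  obtain ⟨a, b, rfl⟩ := Submodule.mem_span_pair.mp hc
  exact ⟨a ^ 2 + a * b + b ^ 2, by simp [dotProduct, Fin.sum_univ_four]; ring⟩

lemma exists_mem_glueCode_add_three_smul {c : Fin 4 → ℤ} (h₁ : 3 ∣ c ⬝ᵥ ![1, 0, 1, 2])
    (h₂ : 3 ∣ c ⬝ᵥ ![1, 2, 0, 1]) : ∃ c₀ ∈ glueCode, ∃ d : Fin 4 → ℤ, c = c₀ + (3 : ℤ) • d := by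
  set c₀ : Fin 4 → ℤ := c 2 • ![1, 0, 1, 2] + (2 * c 1) • ![1, 2, 0, 1]
  refine ⟨c₀, Submodule.mem_span_pair.mpr ⟨_, _, rfl⟩, fun k => (c k - c₀ k) / 3,
    funext fun k => ?_⟩
  simp only [dotProduct, Fin.sum_univ_four] at h₁ h₂
  fin_cases k <;> simp [c₀] at h₁ h₂ ⊢ <;> omega

lemma NE6_eq : NE6 = intVec _ ⊔ glueCode.map glue := by
  have hint : {x : Fin 4 × Fin 6 → ℝ | ∀ p, ∃ m : ℤ, x p = m} =
      (intVec (Fin 4 × Fin 6) : Set (Fin 4 × Fin 6 → ℝ)) :=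
    Set.ext fun _ => mem_intVec.symm
  have h₁ : (fun p => ![vE6, 0, vE6, 2 • vE6] p.1 p.2) = glue ![1, 0, 1, 2] := by
    ext ⟨k, i⟩
    fin_cases k <;> simp [glue_apply]
  have h₂ : (fun p => ![vE6, 2 • vE6, 0, vE6] p.1 p.2) = glue ![1, 2, 0, 1] := by
    ext ⟨k, i⟩
    fin_cases k <;> simp [glue_apply]
  rw [NE6, Submodule.span_union, hint, Submodule.span_eq, glueCode, Submodule.map_span,
    Set.image_pair, h₁, h₂]

lemma mem_NE6_iff {x : Fin 4 × Fin 6 → ℝ} :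
    x ∈ NE6 ↔ ∃ z ∈ intVec _, ∃ c ∈ glueCode, x = z + glue c := by
  simp only [NE6_eq, Submodule.mem_sup, Submodule.mem_map]
  constructor
  · rintro ⟨z, hz, _, ⟨c, hc, rfl⟩, rfl⟩
    exact ⟨z, hz, c, hc, rfl⟩
  · rintro ⟨z, hz, c, hc, rfl⟩
    exact ⟨z, hz, _, ⟨c, hc, rfl⟩, rfl⟩

lemma intVec_le_NE6 : intVec _ ≤ NE6 := NE6_eq ▸ le_sup_left

lemma glue_mem_NE6 {c : Fin 4 → ℤ} (hc : c ∈ glueCode) : glue c ∈ NE6 :=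
  NE6_eq ▸ Submodule.mem_sup_right (Submodule.mem_map_of_mem hc)

lemma BE6_add_glue_self (z : Fin 4 × Fin 6 → ℝ) (c : Fin 4 → ℤ) :
    BE6 (z + glue c) (z + glue c) = BE6 z z + 2 * BE6 z (glue c) + BE6 (glue c) (glue c) := by
  simp only [← bilinBE6_apply, map_add, LinearMap.add_apply, bilinBE6_isSymm.eq (glue c) z]
  ring

theorem NE6_even {x : Fin 4 × Fin 6 → ℝ} (hx : x ∈ NE6) : ∃ m : ℤ, BE6 x x = 2 * m := by
  obtain ⟨z, hz, c, hc, rfl⟩ := mem_NE6_iff.mp hx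
  obtain ⟨a, ha⟩ := exists_even_BE6_self hz
  obtain ⟨b, hb⟩ := exists_int_BE6_glue hz c
  obtain ⟨n, hn⟩ := exists_dotProduct_self_eq_six_mul hc
  refine ⟨a + b + 4 * n, ?_⟩
  rw [BE6_add_glue_self, ha, hb, BE6_glue_glue, hn]
  push_cast
  ring

lemma three_dvd_dotProduct_of_exists_int {z : Fin 4 × Fin 6 → ℝ} (hz : z ∈ intVec _)
    {c c' : Fin 4 → ℤ} (h : ∃ m : ℤ, BE6 (z + glue c) (glue c') = m) : 3 ∣ c ⬝ᵥ c' := by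
  obtain ⟨m, hm⟩ := h
  obtain ⟨m', hm'⟩ := exists_int_BE6_glue hz c'
  rw [← bilinBE6_apply, map_add, LinearMap.add_apply, bilinBE6_apply, bilinBE6_apply, hm',
    BE6_glue_glue] at hm
  have h4 : ((4 * (c ⬝ᵥ c') : ℤ) : ℝ) = ((3 * (m - m') : ℤ) : ℝ) := by
    push_cast
    linarith
  have := Int.cast_injective h4
  omega

theorem mem_NE6_of_dual {y : Fin 4 × Fin 6 → ℝ} (hy : ∀ x ∈ NE6, ∃ m : ℤ, BE6 y x = m) :
    y ∈ NE6 := by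
  obtain ⟨z, hz, c, rfl⟩ := exists_eq_add_glue_of_mulVec_mem
    (blockGE6_mulVec_mem_of_dual fun x hx => hy x (intVec_le_NE6 hx))
  have hdvd : ∀ c' ∈ glueCode, 3 ∣ c ⬝ᵥ c' := fun c' hc' =>
    three_dvd_dotProduct_of_exists_int hz (hy _ (glue_mem_NE6 hc'))
  obtain ⟨c₀, hc₀, d, rfl⟩ := exists_mem_glueCode_add_three_smul
    (hdvd _ (Submodule.subset_span (by simp))) (hdvd _ (Submodule.subset_span (by simp)))
  exact mem_NE6_iff.mpr ⟨z + glue ((3 : ℤ) • d), add_mem hz (glue_three_smul_mem d), c₀, hc₀,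
    by rw [map_add]; abel⟩

theorem finrank_NE6 : Module.finrank ℤ NE6 = 24 := by
  have hsmul : ∀ x ∈ NE6, (3 : ℤ) • x ∈ intVec _ := by
    intro x hx
    obtain ⟨z, hz, c, -, rfl⟩ := mem_NE6_iff.mp hx
    rw [smul_add, ← map_zsmul]
    exact add_mem (Submodule.smul_mem _ _ hz) (glue_three_smul_mem c)
  refine Module.finrank_eq_of_rank_eq ?_
  rw [rank_eq_card_of_intVec_le three_ne_zero intVec_le_NE6 hsmul]
  simp

/-- `N(E₆⁴)` is an even unimodular lattice of rank 24 with respect to the bilinear form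
given by the block diagonal Gram matrix `G(E₆)⁴`. -/
theorem stmt19 :
    -- even
    (∀ x ∈ NE6, ∃ m : ℤ, BE6 x x = 2 * (m : ℝ)) ∧
    -- unimodular: the lattice equals its dual
    (∀ y : Fin 4 × Fin 6 → ℝ,
      (∀ x ∈ NE6, ∃ m : ℤ, BE6 y x = (m : ℝ)) ↔ y ∈ NE6) ∧
    -- rank 24
    Module.finrank ℤ NE6 = 24 := by
  have heven : ∀ x ∈ NE6, ∃ m : ℤ, bilinBE6 x x = 2 * m := by
    simpa only [bilinBE6_apply] using fun x => NE6_even (x := x)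
  refine ⟨fun x => NE6_even, fun y => ⟨mem_NE6_of_dual, fun hy x hx => ?_⟩, finrank_NE6⟩
  simpa only [bilinBE6_apply] using bilinBE6_isSymm.exists_int_of_even heven hy hx
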